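/- arXiv:math/0701435 — 2 statements merged into one kernel-verified Lean document; each statement's English description precedes it below -/
import Mathlib

section
/- (Theorem 2.4, upper bound, arithmetic form.) For every 1 ≤ i ≤ c one has C(t+c−1, t+i−1) · C(t+i−2, i−1) ≤ (1/((i−1)!·(c−i)!)) · ∏_{1≤j≤c, j≠i} M_j, the left-hand side being the i-th total Betti number of a standard determinantal ideal with degree matrix u. -/
/-!
Every maximal shift `M_j` is a sum of `t + j - 1` entries of the degree matrix, all positive,
so `M_j ≥ t + j - 1`. On the other hand `β_i · (i-1)! · (c-i)! = ∏_{j ≠ i} (t + j - 1)`, both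
sides being `(t+c-1)! / ((t-1)! · (t+i-1))`.
-/

open Finset

/-- The paper's `M_i`. -/
def maxShift (t c : ℕ) (u : ℕ → ℕ → ℕ) (i : ℕ) : ℕ :=
  (∑ k ∈ Icc 1 t, u k (c - i + k)) + ∑ j ∈ Icc (t + c - i + 1) (t + c - 1), u t j

theorem prod_Icc_add_sub_one_eq_ascFactorial (t c : ℕ) :
    ∏ j ∈ Icc 1 c, (t + j - 1) = t.ascFactorial c := by
  induction c with
  | zero => simp
  | succ c ih =>
    rw [prod_Icc_succ_top (by omega), ih, Nat.ascFactorial_succ, mul_comm]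
    congr 1

theorem choose_mul_choose_mul_factorial_mul_factorial {t c i : ℕ} (ht : 1 ≤ t) (hi : 1 ≤ i)
    (hic : i ≤ c) :
    (t + c - 1).choose (t + i - 1) * (t + i - 2).choose (i - 1) *
        ((i - 1).factorial * (c - i).factorial) =
      ∏ j ∈ (Icc 1 c).erase i, (t + j - 1) := by
  have hchoose₁ := Nat.choose_mul_factorial_mul_factorial (show t + i - 1 ≤ t + c - 1 by omega)
  have hchoose₂ := Nat.choose_mul_factorial_mul_factorial (show i - 1 ≤ t + i - 2 by omega)
  rw [show t + c - 1 - (t + i - 1) = c - i by omega] at hchoose₁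
  rw [show t + i - 2 - (i - 1) = t - 1 by omega] at hchoose₂
  have hfactorial : (t + i - 1).factorial = (t + i - 1) * (t + i - 2).factorial := by
    rw [show t + i - 1 = (t + i - 2) + 1 by omega, Nat.factorial_succ]
  have hprod := Nat.factorial_mul_ascFactorial' t c (by omega)
  rw [← prod_Icc_add_sub_one_eq_ascFactorial,
    ← mul_prod_erase _ _ (mem_Icc.mpr ⟨hi, hic⟩)] at hprod
  refine Nat.eq_of_mul_eq_mul_right (Nat.mul_pos (by omega : 0 < t + i - 1)
    (t - 1).factorial_pos) ?_
  calc _ = (t + c - 1).choose (t + i - 1) * (c - i).factorial * (t + i - 1) *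
          ((t + i - 2).choose (i - 1) * (i - 1).factorial * (t - 1).factorial) := by ring
    _ = (t + c - 1).choose (t + i - 1) * (t + i - 1).factorial * (c - i).factorial := by
      rw [hchoose₂, hfactorial]; ring
    _ = _ := by rw [hchoose₁, ← hprod]; ring

theorem add_sub_one_le_maxShift {t c : ℕ} (ht : 1 ≤ t) (u : ℕ → ℕ → ℕ)
    (hpos : ∀ i j, 1 ≤ i → i ≤ t → 1 ≤ j → j ≤ t + c - 1 → 0 < u i j)
    {j : ℕ} (hj₁ : 1 ≤ j) (hj₂ : j ≤ c) : t + j - 1 ≤ maxShift t c u j := by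
  have hdiagonal := card_nsmul_le_sum (Icc 1 t) (fun k => u k (c - j + k)) 1 fun k hk => by
    rw [mem_Icc] at hk
    exact hpos k _ hk.1 hk.2 (by omega) (by omega)
  have hlastRow :=
    card_nsmul_le_sum (Icc (t + c - j + 1) (t + c - 1)) (fun l => u t l) 1 fun l hl => by
      rw [mem_Icc] at hl
      exact hpos t l ht le_rfl (by omega) (by omega)
  simp only [Nat.card_Icc, smul_eq_mul, mul_one] at hdiagonal hlastRow
  unfold maxShift
  omega

theorem upper_bound_betti_standard_determinantal_general (t c : ℕ) (ht : 1 ≤ t)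
    (u : ℕ → ℕ → ℕ)
    (hpos : ∀ i j, 1 ≤ i → i ≤ t → 1 ≤ j → j ≤ t + c - 1 → 0 < u i j)
    (M : ℕ → ℕ)
    (hM : ∀ i, 1 ≤ i → i ≤ c →
      M i = (∑ k ∈ Finset.Icc 1 t, u k (c - i + k)) +
        ∑ j ∈ Finset.Icc (t + c - i + 1) (t + c - 1), u t j) :
    ∀ i, 1 ≤ i → i ≤ c →
      ((t + c - 1).choose (t + i - 1) : ℚ) * ((t + i - 2).choose (i - 1) : ℚ) ≤
      (1 / (((i - 1).factorial : ℚ) * ((c - i).factorial : ℚ))) *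
        ∏ j ∈ (Finset.Icc 1 c).erase i, (M j : ℚ) := by
  intro i hi hic
  rw [one_div, inv_mul_eq_div, le_div_iff₀ (by positivity)]
  calc ((t + c - 1).choose (t + i - 1) : ℚ) * (t + i - 2).choose (i - 1) *
        ((i - 1).factorial * (c - i).factorial)
      = ∏ j ∈ (Icc 1 c).erase i, ((t + j - 1 : ℕ) : ℚ) := by
        exact_mod_cast choose_mul_choose_mul_factorial_mul_factorial ht hi hic
    _ ≤ ∏ j ∈ (Icc 1 c).erase i, (M j : ℚ) := by
      refine prod_le_prod (fun _ _ => by positivity) fun j hj => ?_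
      obtain ⟨hj₁, hj₂⟩ := mem_Icc.mp (mem_of_mem_erase hj)
      rw [hM j hj₁ hj₂]
      exact_mod_cast add_sub_one_le_maxShift ht u hpos hj₁ hj₂

/-- Theorem 2.4, upper bound, arithmetic form. For every `1 ≤ i ≤ c` one has
`C(t+c−1, t+i−1)·C(t+i−2, i−1) ≤ (1/((i−1)!·(c−i)!)) · ∏_{1≤j≤c, j≠i} M j`,
the left-hand side being the `i`-th total Betti number of a standard determinantal
ideal with degree matrix `u`. -/
theorem upper_bound_betti_standard_determinantal (t c : ℕ) (ht : 1 ≤ t) (hc : 1 ≤ c)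
    (u : ℕ → ℕ → ℕ)
    (hpos : ∀ i j, 1 ≤ i → i ≤ t → 1 ≤ j → j ≤ t + c - 1 → 0 < u i j)
    (hrow : ∀ i j, 1 ≤ i → i + 1 ≤ t → 1 ≤ j → j ≤ t + c - 1 → u i j ≤ u (i + 1) j)
    (hcol : ∀ i j, 1 ≤ i → i ≤ t → 1 ≤ j → j + 1 ≤ t + c - 1 → u i j ≤ u i (j + 1))
    (m M : ℕ → ℕ)
    (hm : ∀ i, 1 ≤ i → i ≤ c →
      m i = (∑ j ∈ Finset.Icc 1 i, u 1 j) + ∑ k ∈ Finset.Icc 2 t, u k (i + k - 1))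
    (hM : ∀ i, 1 ≤ i → i ≤ c →
      M i = (∑ k ∈ Finset.Icc 1 t, u k (c - i + k)) +
        ∑ j ∈ Finset.Icc (t + c - i + 1) (t + c - 1), u t j) :
    ∀ i, 1 ≤ i → i ≤ c →
      ((t + c - 1).choose (t + i - 1) : ℚ) * ((t + i - 2).choose (i - 1) : ℚ) ≤
      (1 / (((i - 1).factorial : ℚ) * ((c - i).factorial : ℚ))) *
        ∏ j ∈ (Finset.Icc 1 c).erase i, (M j : ℚ) :=
  upper_bound_betti_standard_determinantal_general t c ht u hpos M hM
end

section
/- (Theorem 3.3, lower bounds, arithmetic form.) The following three inequalities of rational numbers hold, all denominators being positive: (m_2/(M_2 − m_1))·(m_3/(M_3 − m_1)) ≤ t(t+1)/2; (m_1/(M_2 − m_1))·(m_3/(M_3 − m_2)) ≤ t²−1; and (m_1/(M_3 − m_1))·(m_2/(M_3 − m_2)) ≤ t(t−1)/2. The right-hand sides are the total Betti numbers β_1, β_2, β_3 of the ideal of submaximal minors of the symmetric matrix. -/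
/-!
Write `S = a₁ + ⋯ + a_{t-1}`. Then `m₁ = 2S`, `m₂ = 2S + a_t + a₁`, `m₃ = 2S + 2a_t + a₁ + a₂`,
while `M₂ - m₁ = 3a_t - a₁`, `M₃ - m₁ = a_{t-1} + 3a_t` and `M₃ - m₂ = a_{t-1} + 2a_t - a₁`.
Since `0 < a₁ ≤ a_i ≤ a_{t-1} ≤ a_t` we have `0 ≤ S ≤ (t-1)·a_{t-1}`, and each of the six
ratios is bounded by a factor of the corresponding Betti number:
`m₂/(M₂-m₁) ≤ t`, `m₃/(M₃-m₁) ≤ (t+1)/2`, `m₁/(M₂-m₁) ≤ t-1`, `m₃/(M₃-m₂) ≤ t+1`,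
`m₁/(M₃-m₁) ≤ (t-1)/2` and `m₂/(M₃-m₂) ≤ t`.
-/

open Finset

lemma div_mul_div_le_mul_of_le_mul {K : Type*} [Field K] [LinearOrder K] [IsStrictOrderedRing K]
    {x y d e k l : K} (hy : 0 ≤ y) (hd : 0 < d) (he : 0 < e) (hk : 0 ≤ k)
    (hxd : x ≤ k * d) (hye : y ≤ l * e) : x / d * (y / e) ≤ k * l :=
  mul_le_mul ((div_le_iff₀ hd).2 hxd) ((div_le_iff₀ he).2 hye) (div_nonneg hy he.le) hk

lemma Nat.monotoneOn_Icc_of_le_succ {β : Type*} [Preorder β] {f : ℕ → β} {m n : ℕ}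
    (hf : ∀ i, m ≤ i → i + 1 ≤ n → f i ≤ f (i + 1)) : MonotoneOn f (Set.Icc m n) :=
  monotoneOn_of_le_succ Set.ordConnected_Icc fun i _ hi hi' => hf i hi.1 hi'.2

section SumBounds

variable {β : Type*} [AddCommMonoid β] [PartialOrder β] [IsOrderedAddMonoid β]
  {f : ℕ → β} {n : ℕ}

lemma Finset.sum_Icc_one_le_nsmul_of_monotoneOn (hf : MonotoneOn f (Set.Icc 1 n)) :
    ∑ i ∈ Icc 1 n, f i ≤ n • f n := by
  simpa using sum_le_card_nsmul (Icc 1 n) f (f n) fun i hi =>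
    hf (coe_Icc 1 n ▸ hi) (Set.mem_Icc.2 ⟨(mem_Icc.1 hi).1.trans (mem_Icc.1 hi).2, le_rfl⟩)
      (mem_Icc.1 hi).2

lemma Finset.nsmul_le_sum_Icc_one_of_monotoneOn (hf : MonotoneOn f (Set.Icc 1 n)) :
    n • f 1 ≤ ∑ i ∈ Icc 1 n, f i := by
  simpa using card_nsmul_le_sum (Icc 1 n) f (f 1) fun i hi =>
    hf (Set.mem_Icc.2 ⟨le_rfl, (mem_Icc.1 hi).1.trans (mem_Icc.1 hi).2⟩) (coe_Icc 1 n ▸ hi)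
      (mem_Icc.1 hi).1

end SumBounds

section RatioBounds

variable {K : Type*} [Field K] [LinearOrder K] [IsStrictOrderedRing K] {t S b c u A : K}

lemma shift_ratio_product_le_betti_one (hb : 0 < b) (hbc : b ≤ c) (hcA : c ≤ A) (hbu : b ≤ u)
    (huA : u ≤ A) (hS : 0 ≤ S) (hSu : S ≤ (t - 1) * u) (ht : 2 ≤ t) :
    (2 * S + A + b) / (3 * A - b) * ((2 * S + 2 * A + b + c) / (u + 3 * A)) ≤
      t * (t + 1) / 2 := by
  have hx : 2 * S + A + b ≤ t * (3 * A - b) := by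
    nlinarith [mul_le_mul_of_nonneg_left huA (by linarith : 0 ≤ t - 1)]
  have hy : 2 * S + 2 * A + b + c ≤ (t + 1) / 2 * (u + 3 * A) := by
    nlinarith [mul_le_mul_of_nonneg_left huA (by linarith : 0 ≤ t - 1)]
  calc _ ≤ t * ((t + 1) / 2) :=
        div_mul_div_le_mul_of_le_mul (by linarith) (by linarith) (by linarith) (by linarith) hx hy
    _ = t * (t + 1) / 2 := by ring

lemma shift_ratio_product_le_betti_two (hb : 0 < b) (hbc : b ≤ c) (hcA : c ≤ A) (hbu : b ≤ u)
    (huA : u ≤ A) (hS : 0 ≤ S) (hSu : S ≤ (t - 1) * u) (ht : 2 ≤ t) :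
    2 * S / (3 * A - b) * ((2 * S + 2 * A + b + c) / (u + 2 * A - b)) ≤ t ^ 2 - 1 := by
  have hx : 2 * S ≤ (t - 1) * (3 * A - b) := by
    nlinarith [mul_le_mul_of_nonneg_left huA (by linarith : 0 ≤ t - 1)]
  have hy : 2 * S + 2 * A + b + c ≤ (t + 1) * (u + 2 * A - b) := by
    nlinarith [mul_le_mul_of_nonneg_left huA (by linarith : 0 ≤ t - 2),
      mul_le_mul_of_nonneg_left hbu (by linarith : 0 ≤ t + 1)]
  calc _ ≤ (t - 1) * (t + 1) :=
        div_mul_div_le_mul_of_le_mul (by linarith) (by linarith) (by linarith) (by linarith) hx hy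
    _ = t ^ 2 - 1 := by ring

lemma shift_ratio_product_le_betti_three (hb : 0 < b) (hbu : b ≤ u) (huA : u ≤ A)
    (hS : 0 ≤ S) (hSu : S ≤ (t - 1) * u) (ht : 2 ≤ t) :
    2 * S / (u + 3 * A) * ((2 * S + A + b) / (u + 2 * A - b)) ≤ t * (t - 1) / 2 := by
  have hx : 2 * S ≤ (t - 1) / 2 * (u + 3 * A) := by
    nlinarith [mul_le_mul_of_nonneg_left huA (by linarith : 0 ≤ t - 1)]
  have hy : 2 * S + A + b ≤ t * (u + 2 * A - b) := by
    nlinarith [mul_le_mul_of_nonneg_left huA (by linarith : 0 ≤ t - 2),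
      mul_le_mul_of_nonneg_left hbu (by linarith : 0 ≤ t + 1)]
  calc _ ≤ (t - 1) / 2 * t :=
        div_mul_div_le_mul_of_le_mul (by linarith) (by linarith) (by linarith) (by linarith) hx hy
    _ = t * (t - 1) / 2 := by ring

end RatioBounds

theorem lower_bound_betti_symmetric_submaximal_minors_general (t : ℕ) (ht : 2 ≤ t) (a : ℕ → ℚ)
    (hmono : ∀ i, 1 ≤ i → i + 1 ≤ t → a i ≤ a (i + 1))
    (hint : ∀ i j, 1 ≤ i → i ≤ j → j ≤ t → ∃ n : ℕ, 0 < n ∧ a i + a j = n)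
    (ℓ m1 m2 M2 m3 M3 : ℚ)
    (hℓ : ℓ = 2 * ∑ i ∈ Finset.Icc 1 t, a i)
    (hm1 : m1 = ℓ - 2 * a t)
    (hm2 : m2 = ℓ - a t + a 1) (hM2 : M2 = ℓ + a t - a 1)
    (hm3 : m3 = ℓ + a 1 + a 2) (hM3 : M3 = ℓ + a (t - 1) + a t) :
    0 < M2 - m1 ∧ 0 < M3 - m1 ∧ 0 < M3 - m2 ∧
    (m2 / (M2 - m1)) * (m3 / (M3 - m1)) ≤ (t : ℚ) * ((t : ℚ) + 1) / 2 ∧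
    (m1 / (M2 - m1)) * (m3 / (M3 - m2)) ≤ (t : ℚ) ^ 2 - 1 ∧
    (m1 / (M3 - m1)) * (m2 / (M3 - m2)) ≤ (t : ℚ) * ((t : ℚ) - 1) / 2 := by
  have ha1 : 0 < a 1 := by
    obtain ⟨n, hn, h2a1⟩ := hint 1 1 le_rfl le_rfl (by omega)
    have : (1 : ℚ) ≤ n := by exact_mod_cast hn
    linarith
  have hmon := Nat.monotoneOn_Icc_of_le_succ hmono
  obtain ⟨u, rfl⟩ : ∃ u, t = u + 1 := ⟨t - 1, by omega⟩
  have mono {i j : ℕ} (hi : 1 ≤ i) (hij : i ≤ j) (hj : j ≤ u + 1) : a i ≤ a j :=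
    hmon ⟨hi, hij.trans hj⟩ ⟨hi.trans hij, hj⟩ hij
  have hu : MonotoneOn a (Set.Icc 1 u) := hmon.mono (Set.Icc_subset_Icc_right (by omega))
  have hS : 0 ≤ ∑ i ∈ Icc 1 u, a i :=
    (nsmul_nonneg ha1.le u).trans (nsmul_le_sum_Icc_one_of_monotoneOn hu)
  have hSu := sum_Icc_one_le_nsmul_of_monotoneOn hu
  have h12 : a 1 ≤ a 2 := mono le_rfl (by omega) (by omega)
  have h2A : a 2 ≤ a (u + 1) := mono (by omega) (by omega) le_rfl
  have h1u : a 1 ≤ a u := mono le_rfl (by omega) (by omega)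
  have huA : a u ≤ a (u + 1) := mono (by omega) (by omega) le_rfl
  rw [sum_Icc_succ_top (by omega)] at hℓ
  rw [Nat.add_sub_cancel] at hM3
  have hSu' : ∑ i ∈ Icc 1 u, a i ≤ ((u + 1 : ℕ) - 1 : ℚ) * a u := by simpa using hSu
  have ht' : (2 : ℚ) ≤ (u + 1 : ℕ) := by exact_mod_cast ht
  subst hℓ hm1 hm2 hM2 hm3 hM3
  refine ⟨by linarith, by linarith, by linarith, ?_, ?_, ?_⟩
  · exact Eq.trans_le (by ring) (shift_ratio_product_le_betti_one ha1 h12 h2A h1u huA hS hSu' ht')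
  · exact Eq.trans_le (by ring) (shift_ratio_product_le_betti_two ha1 h12 h2A h1u huA hS hSu' ht')
  · exact Eq.trans_le (by ring) (shift_ratio_product_le_betti_three ha1 h1u huA hS hSu' ht')

/-- Theorem 3.3, lower bounds, arithmetic form, for the ideal of submaximal minors of a
`t × t` homogeneous symmetric matrix: all denominators are positive and
`(m2/(M2−m1))·(m3/(M3−m1)) ≤ t(t+1)/2`, `(m1/(M2−m1))·(m3/(M3−m2)) ≤ t²−1`,
`(m1/(M3−m1))·(m2/(M3−m2)) ≤ t(t−1)/2`, the right-hand sides being the total Betti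
numbers `β 1, β 2, β 3`. -/
theorem lower_bound_betti_symmetric_submaximal_minors (t : ℕ) (ht : 2 ≤ t) (a : ℕ → ℚ)
    (hmono : ∀ i, 1 ≤ i → i + 1 ≤ t → a i ≤ a (i + 1))
    (hint : ∀ i j, 1 ≤ i → i ≤ j → j ≤ t → ∃ n : ℕ, 0 < n ∧ a i + a j = n)
    (ℓ m1 M1 m2 M2 m3 M3 : ℚ)
    (hℓ : ℓ = 2 * ∑ i ∈ Finset.Icc 1 t, a i)
    (hm1 : m1 = ℓ - 2 * a t) (hM1 : M1 = ℓ - 2 * a 1)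
    (hm2 : m2 = ℓ - a t + a 1) (hM2 : M2 = ℓ + a t - a 1)
    (hm3 : m3 = ℓ + a 1 + a 2) (hM3 : M3 = ℓ + a (t - 1) + a t) :
    0 < M2 - m1 ∧ 0 < M3 - m1 ∧ 0 < M3 - m2 ∧
    (m2 / (M2 - m1)) * (m3 / (M3 - m1)) ≤ (t : ℚ) * ((t : ℚ) + 1) / 2 ∧
    (m1 / (M2 - m1)) * (m3 / (M3 - m2)) ≤ (t : ℚ) ^ 2 - 1 ∧
    (m1 / (M3 - m1)) * (m2 / (M3 - m2)) ≤ (t : ℚ) * ((t : ℚ) - 1) / 2 :=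
  lower_bound_betti_symmetric_submaximal_minors_general t ht a hmono hint ℓ m1 m2 M2 m3 M3 hℓ hm1
    hm2 hM2 hm3 hM3
end
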